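/- Intermediate lower bound in the optimality-gap proof: Let S (states) and A (actions) be finite nonempty types, let γ be a real number with 0 < γ < 1, let r_max > 0, set c = r_max/(1−γ), and let μ₀ be a probability vector on S. Let T, T̂ : S → A → S → ℝ be transition kernels and let r : S → A → ℝ satisfy |r s a| ≤ r_max for all s, a. For a policy π and dynamics K ∈ {T, T̂}, let P_{K,π} be the induced state-transition matrix and ρ^π_K the normalized state–action occupancy, and let η_M(π) = ∑_{s,a} ρ^π_T(s,a) · r s a be the normalized true return. Let u, û : S → A → ℝ and ε_density ≥ 0 satisfy |u s' a − û s' a| ≤ ε_density for all s', a, and set U(s,a) = ∑_{s'} T̂ s a s' · u s' a and Û(s,a) = ∑_{s'} T̂ s a s' · û s' a. Assume there exist C > 0 and ε_approx ≥ 0 such that for all (s,a) and all f : S → ℝ with |f s'| ≤ 1 for all s', one has |∑_{s'} (T̂ s a s' − T s a s') · f s'| ≤ C · U(s,a) + ε_approx. Set λ = γ·c·C. Suppose π̂ is a policy such that for every policy π, ∑_{s,a} ρ^{π̂}_{T̂}(s,a) · (r s a − λ·Û(s,a)) ≥ ∑_{s,a} ρ^π_{T̂}(s,a) · (r s a − λ·Û(s,a)).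 Then for every policy π, η_M(π̂) ≥ ∑_{s,a} ρ^π_{T̂}(s,a) · (r s a − λ·U(s,a)) − 2·λ·ε_density − γ·c·ε_approx. -/

import Mathlib

/-- A transition kernel on finite state and action spaces. -/
def IsKernel {S A : Type*} [Fintype S] (K : S → A → S → ℝ) : Prop :=
  (∀ s a s', 0 ≤ K s a s') ∧ ∀ s a, ∑ s', K s a s' = 1

/-- A (stationary, stochastic) policy. -/
def IsPolicy {S A : Type*} [Fintype A] (π : S → A → ℝ) : Prop :=
  (∀ s a, 0 ≤ π s a) ∧ ∀ s, ∑ a, π s a = 1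

/-- The state-transition matrix induced by dynamics `K` and policy `π`. -/
noncomputable def stateMatrix {S A : Type*} [Fintype A]
    (K : S → A → S → ℝ) (π : S → A → ℝ) : Matrix S S ℝ :=
  fun s s' => ∑ a, π s a * K s a s'

/-- The normalized discounted state–action occupancy of `μ₀` under dynamics `K`
and policy `π`. -/
noncomputable def occupancy {S A : Type*} [Fintype S] [Fintype A] [DecidableEq S]
    (γ : ℝ) (μ₀ : S → ℝ) (K : S → A → S → ℝ) (π : S → A → ℝ) (s : S) (a : A) : ℝ :=
  (1 - γ) * ∑' t : ℕ, γ ^ t * Matrix.vecMul μ₀ (stateMatrix K π ^ t) s * π s a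

/-! The resolvent identity `R_T - R_T̂ = γ R_T̂ (P_T - P_T̂) R_T` for `R_K = (1 - γ P_{K,π̂})⁻¹`
gives the simulation lemma: the true return of `π̂` is its model return plus `γ` times the model
occupancy average of `(T - T̂) V`, where `V = V^{π̂}_T` is bounded by `c`. Testing the model-error
hypothesis against `V / c` bounds this correction below by `-λ U - γ c ε_approx`, and replacing
`U` by `Û` costs `λ ε_density` on each side of the optimality inequality of `π̂`. -/

open Finset Matrix

theorem tsum_pow_sub_tsum_pow {α : Type*} [Ring α] [TopologicalSpace α] [IsTopologicalRing α]
    [T2Space α] {x y : α} (hx : Summable (x ^ ·)) (hy : Summable (y ^ ·)) :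
    ∑' i : ℕ, y ^ i - ∑' i : ℕ, x ^ i = (∑' i : ℕ, x ^ i) * (y - x) * ∑' i : ℕ, y ^ i := by
  calc ∑' i : ℕ, y ^ i - ∑' i : ℕ, x ^ i
      = (∑' i : ℕ, x ^ i) * (1 - x) * ∑' i : ℕ, y ^ i
        - (∑' i : ℕ, x ^ i) * ((1 - y) * ∑' i : ℕ, y ^ i) := by
        rw [hx.tsum_pow_mul_one_sub, hy.one_sub_mul_tsum_pow, one_mul, mul_one]
    _ = (∑' i : ℕ, x ^ i) * (y - x) * ∑' i : ℕ, y ^ i := by noncomm_ring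

theorem abs_sum_mul_le_sum_mul {ι : Type*} {s : Finset ι} {w f : ι → ℝ} {B : ℝ}
    (hw : ∀ i ∈ s, 0 ≤ w i) (hf : ∀ i ∈ s, |f i| ≤ B) :
    |∑ i ∈ s, w i * f i| ≤ (∑ i ∈ s, w i) * B := by
  rw [sum_mul]
  refine (abs_sum_le_sum_abs _ _).trans (sum_le_sum fun i hi => ?_)
  rw [abs_mul, abs_of_nonneg (hw i hi)]
  exact mul_le_mul_of_nonneg_left (hf i hi) (hw i hi)

theorem abs_sum_mul_le_of_forall_abs_le_one {ι : Type*} [Fintype ι] {d W : ι → ℝ} {c M : ℝ}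
    (hc : 0 < c) (hW : ∀ i, |W i| ≤ c)
    (hd : ∀ f : ι → ℝ, (∀ i, |f i| ≤ 1) → |∑ i, d i * f i| ≤ M) :
    |∑ i, d i * W i| ≤ c * M := by
  have hWc (i : ι) : |W i / c| ≤ 1 := by
    rw [abs_div, abs_of_pos hc, div_le_one hc]
    exact hW i
  have hsum : ∑ i, d i * W i = c * ∑ i, d i * (W i / c) := by
    rw [mul_sum]
    exact sum_congr rfl fun i _ => by field_simp
  rw [hsum, abs_mul, abs_of_pos hc]
  exact mul_le_mul_of_nonneg_left (hd _ hWc) hc.le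

section DiscountedResolvent

variable {S : Type*} [Fintype S] [DecidableEq S] {γ : ℝ} {P : Matrix S S ℝ}

/-- `(1 - γ P)⁻¹` as a Neumann series. -/
noncomputable def discountedResolvent (γ : ℝ) (P : Matrix S S ℝ) : Matrix S S ℝ :=
  ∑' t : ℕ, (γ • P) ^ t

theorem summable_smul_pow_of_mem_rowStochastic (hγ0 : 0 ≤ γ) (hγ1 : γ < 1)
    (hP : P ∈ rowStochastic ℝ S) : Summable fun t : ℕ => (γ • P) ^ t := by
  refine Pi.summable.2 fun i => Pi.summable.2 fun j => ?_
  refine (summable_geometric_of_lt_one hγ0 hγ1).of_nonneg_of_le (fun t => ?_) (fun t => ?_)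
  all_goals
    have hPt := pow_mem hP t
    simp only [smul_pow, Matrix.smul_apply, smul_eq_mul]
  · exact mul_nonneg (pow_nonneg hγ0 t) (nonneg_of_mem_rowStochastic hPt)
  · exact mul_le_of_le_one_right (pow_nonneg hγ0 t) (le_one_of_mem_rowStochastic hPt)

theorem discountedResolvent_apply (hsum : Summable fun t : ℕ => (γ • P) ^ t) (i j : S) :
    discountedResolvent γ P i j = ∑' t : ℕ, γ ^ t * (P ^ t) i j := by
  have hrow : (∑' t : ℕ, (γ • P) ^ t) i = ∑' t : ℕ, ((γ • P) ^ t) i := tsum_apply hsum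
  have hentry : (∑' t : ℕ, ((γ • P) ^ t) i) j = ∑' t : ℕ, ((γ • P) ^ t) i j :=
    tsum_apply (Pi.summable.1 hsum i)
  rw [discountedResolvent, hrow, hentry]
  simp only [smul_pow, Matrix.smul_apply, smul_eq_mul]

theorem discountedResolvent_apply_nonneg (hγ0 : 0 ≤ γ) (hP : ∀ i j, 0 ≤ P i j)
    (hsum : Summable fun t : ℕ => (γ • P) ^ t) (i j : S) :
    0 ≤ discountedResolvent γ P i j := by
  rw [discountedResolvent_apply hsum]
  exact tsum_nonneg fun t => mul_nonneg (pow_nonneg hγ0 t) (pow_apply_nonneg hP t i j)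

theorem discountedResolvent_mulVec_one (hγ1 : γ ≠ 1) (hP : P *ᵥ 1 = 1)
    (hsum : Summable fun t : ℕ => (γ • P) ^ t) :
    discountedResolvent γ P *ᵥ 1 = (1 - γ)⁻¹ • 1 := by
  have key : (1 - γ) • (discountedResolvent γ P *ᵥ 1) = 1 := by
    calc (1 - γ) • (discountedResolvent γ P *ᵥ 1)
        = discountedResolvent γ P *ᵥ ((1 - γ • P) *ᵥ 1) := by
          rw [sub_mulVec, one_mulVec, smul_mulVec, hP, mulVec_sub, mulVec_smul, sub_smul,
            one_smul]
      _ = 1 := by rw [mulVec_mulVec, discountedResolvent, hsum.tsum_pow_mul_one_sub, one_mulVec]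
  exact (eq_inv_smul_iff₀ (sub_ne_zero.2 hγ1.symm)).2 key

theorem vecMul_discountedResolvent_apply (μ : S → ℝ) (hsum : Summable fun t : ℕ => (γ • P) ^ t)
    (s : S) : (μ ᵥ* discountedResolvent γ P) s = ∑' t : ℕ, γ ^ t * (μ ᵥ* P ^ t) s := by
  have hentry (i : S) : Summable fun t : ℕ => μ i * (γ ^ t * (P ^ t) i s) := by
    refine Summable.mul_left _ ?_
    simpa only [smul_pow, Matrix.smul_apply, smul_eq_mul] using
      Pi.summable.1 (Pi.summable.1 hsum i) s
  simp only [vecMul, dotProduct, discountedResolvent_apply hsum, ← tsum_mul_left]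
  rw [← Summable.tsum_finsetSum fun i _ => hentry i]
  simp only [mul_sum]
  exact tsum_congr fun t => sum_congr rfl fun i _ => by ring

end DiscountedResolvent

section Occupancy

variable {S A : Type*} [Fintype S] [Fintype A]

theorem stateMatrix_sub_mulVec_apply (K K' : S → A → S → ℝ) (π : S → A → ℝ) (W : S → ℝ)
    (s : S) : ((stateMatrix K π - stateMatrix K' π) *ᵥ W) s =
      ∑ a, π s a * ∑ s', (K s a s' - K' s a s') * W s' := by
  simp only [mulVec, dotProduct, Matrix.sub_apply, stateMatrix, ← sum_sub_distrib, sum_mul,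
    mul_sum]
  rw [sum_comm]
  exact sum_congr rfl fun a _ => sum_congr rfl fun s' _ => by ring

variable [DecidableEq S] {γ : ℝ} {μ₀ : S → ℝ} {K K' : S → A → S → ℝ} {π : S → A → ℝ}

theorem stateMatrix_mem_rowStochastic (hK : IsKernel K) (hπ : IsPolicy π) :
    stateMatrix K π ∈ rowStochastic ℝ S := by
  refine mem_rowStochastic_iff_sum.2
    ⟨fun s s' => sum_nonneg fun a _ => mul_nonneg (hπ.1 s a) (hK.1 s a s'), fun s => ?_⟩
  simp only [stateMatrix]
  rw [sum_comm]
  simp [← mul_sum, hK.2, hπ.2]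

theorem summable_smul_pow_stateMatrix (hγ0 : 0 ≤ γ) (hγ1 : γ < 1) (hK : IsKernel K)
    (hπ : IsPolicy π) : Summable fun t : ℕ => (γ • stateMatrix K π) ^ t :=
  summable_smul_pow_of_mem_rowStochastic hγ0 hγ1 (stateMatrix_mem_rowStochastic hK hπ)

/-- The unnormalised value function `V^π_K = (1 - γ P_{K,π})⁻¹ r_π`. -/
noncomputable def policyValue (γ : ℝ) (K : S → A → S → ℝ) (π : S → A → ℝ) (r : S → A → ℝ) :
    S → ℝ :=
  discountedResolvent γ (stateMatrix K π) *ᵥ fun s => ∑ a, π s a * r s a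

theorem occupancy_eq (hγ0 : 0 ≤ γ) (hγ1 : γ < 1) (hK : IsKernel K) (hπ : IsPolicy π)
    (s : S) (a : A) :
    occupancy γ μ₀ K π s a =
      (1 - γ) * (μ₀ ᵥ* discountedResolvent γ (stateMatrix K π)) s * π s a := by
  rw [occupancy, tsum_mul_right, vecMul_discountedResolvent_apply μ₀
    (summable_smul_pow_stateMatrix hγ0 hγ1 hK hπ), mul_assoc]

theorem sum_occupancy_mul (hγ0 : 0 ≤ γ) (hγ1 : γ < 1) (hK : IsKernel K) (hπ : IsPolicy π)
    (f : S → A → ℝ) :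
    ∑ s, ∑ a, occupancy γ μ₀ K π s a * f s a =
      (1 - γ) * ((μ₀ ᵥ* discountedResolvent γ (stateMatrix K π)) ⬝ᵥ
        fun s => ∑ a, π s a * f s a) := by
  simp only [occupancy_eq hγ0 hγ1 hK hπ, dotProduct, mul_sum]
  exact sum_congr rfl fun s _ => sum_congr rfl fun a _ => by ring

theorem occupancy_nonneg (hγ0 : 0 ≤ γ) (hγ1 : γ < 1) (hμ0 : ∀ s, 0 ≤ μ₀ s) (hK : IsKernel K)
    (hπ : IsPolicy π) (s : S) (a : A) : 0 ≤ occupancy γ μ₀ K π s a := by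
  have hR := discountedResolvent_apply_nonneg hγ0
    (fun _ _ => nonneg_of_mem_rowStochastic (stateMatrix_mem_rowStochastic hK hπ))
    (summable_smul_pow_stateMatrix hγ0 hγ1 hK hπ)
  rw [occupancy_eq hγ0 hγ1 hK hπ]
  have hvisit : 0 ≤ (μ₀ ᵥ* discountedResolvent γ (stateMatrix K π)) s :=
    sum_nonneg fun i _ => mul_nonneg (hμ0 i) (hR i s)
  exact mul_nonneg (mul_nonneg (sub_nonneg.2 hγ1.le) hvisit) (hπ.1 s a)

theorem sum_occupancy (hγ0 : 0 ≤ γ) (hγ1 : γ < 1) (hμ1 : ∑ s, μ₀ s = 1) (hK : IsKernel K)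
    (hπ : IsPolicy π) : ∑ s, ∑ a, occupancy γ μ₀ K π s a = 1 := by
  have hR1 := discountedResolvent_mulVec_one hγ1.ne
    (one_vecMul_of_mem_rowStochastic (stateMatrix_mem_rowStochastic hK hπ))
    (summable_smul_pow_stateMatrix hγ0 hγ1 hK hπ)
  have h := sum_occupancy_mul (μ₀ := μ₀) hγ0 hγ1 hK hπ fun _ _ => 1
  simp only [mul_one, hπ.2] at h
  rw [h, ← dotProduct_mulVec, ← Pi.one_def, hR1, dotProduct_smul, dotProduct_one, hμ1,
    smul_eq_mul, mul_one, mul_inv_cancel₀ (sub_ne_zero.2 hγ1.ne')]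

theorem sum_occupancy_mul_le_add (hγ0 : 0 ≤ γ) (hγ1 : γ < 1) (hμ0 : ∀ s, 0 ≤ μ₀ s)
    (hμ1 : ∑ s, μ₀ s = 1) (hK : IsKernel K) (hπ : IsPolicy π) {f g : S → A → ℝ} {e : ℝ}
    (hfg : ∀ s a, f s a ≤ g s a + e) :
    ∑ s, ∑ a, occupancy γ μ₀ K π s a * f s a ≤
      ∑ s, ∑ a, occupancy γ μ₀ K π s a * g s a + e := by
  calc ∑ s, ∑ a, occupancy γ μ₀ K π s a * f s a
      ≤ ∑ s, ∑ a, occupancy γ μ₀ K π s a * (g s a + e) := by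
        gcongr with s _ a _
        · exact occupancy_nonneg hγ0 hγ1 hμ0 hK hπ s a
        · exact hfg s a
    _ = ∑ s, ∑ a, occupancy γ μ₀ K π s a * g s a + (∑ s, ∑ a, occupancy γ μ₀ K π s a) * e := by
        simp only [mul_add, sum_add_distrib, sum_mul]
    _ = ∑ s, ∑ a, occupancy γ μ₀ K π s a * g s a + e := by
        rw [sum_occupancy hγ0 hγ1 hμ1 hK hπ, one_mul]

theorem abs_policyValue_le (hγ0 : 0 ≤ γ) (hγ1 : γ < 1) (hK : IsKernel K) (hπ : IsPolicy π)
    {r : S → A → ℝ} {B : ℝ} (hr : ∀ s a, |r s a| ≤ B) (s : S) :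
    |policyValue γ K π r s| ≤ B / (1 - γ) := by
  have hsum := summable_smul_pow_stateMatrix hγ0 hγ1 hK hπ
  have hP := stateMatrix_mem_rowStochastic hK hπ
  have hR1 := congrFun
    (discountedResolvent_mulVec_one hγ1.ne (one_vecMul_of_mem_rowStochastic hP) hsum) s
  simp only [mulVec, dotProduct, Pi.one_apply, mul_one, Pi.smul_apply, smul_eq_mul] at hR1
  have hreward (s' : S) : |∑ a, π s' a * r s' a| ≤ B := by
    simpa [hπ.2] using abs_sum_mul_le_sum_mul (s := univ) (fun a _ => hπ.1 s' a) fun a _ => hr s' a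
  calc |policyValue γ K π r s|
      ≤ (∑ s', discountedResolvent γ (stateMatrix K π) s s') * B :=
        abs_sum_mul_le_sum_mul
          (fun s' _ => discountedResolvent_apply_nonneg hγ0
            (fun _ _ => nonneg_of_mem_rowStochastic hP) hsum s s') fun s' _ => hreward s'
    _ = B / (1 - γ) := by rw [hR1, inv_mul_eq_div]

theorem sum_occupancy_mul_simulation (hγ0 : 0 ≤ γ) (hγ1 : γ < 1) (hK : IsKernel K)
    (hK' : IsKernel K') (hπ : IsPolicy π) (r : S → A → ℝ) :
    ∑ s, ∑ a, occupancy γ μ₀ K π s a * r s a =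
      ∑ s, ∑ a, occupancy γ μ₀ K' π s a *
        (r s a + γ * ∑ s', (K s a s' - K' s a s') * policyValue γ K π r s') := by
  set P := stateMatrix K π
  set P' := stateMatrix K' π
  set R := discountedResolvent γ P
  set R' := discountedResolvent γ P'
  set x : S → ℝ := fun s => ∑ a, π s a * r s a
  have hresolvent : R = R' + γ • (R' * (P - P') * R) := by
    have h : R - R' = R' * (γ • P - γ • P') * R :=
      tsum_pow_sub_tsum_pow (summable_smul_pow_stateMatrix hγ0 hγ1 hK' hπ)
        (summable_smul_pow_stateMatrix hγ0 hγ1 hK hπ)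
    rw [← smul_sub, mul_smul_comm, smul_mul_assoc] at h
    exact eq_add_of_sub_eq' h
  have hreward : (fun s => ∑ a, π s a *
        (r s a + γ * ∑ s', (K s a s' - K' s a s') * policyValue γ K π r s')) =
      x + γ • ((P - P') *ᵥ R *ᵥ x) := by
    funext s
    simp only [Pi.add_apply, Pi.smul_apply, smul_eq_mul, P, P', stateMatrix_sub_mulVec_apply, x,
      mul_add, sum_add_distrib, mul_sum]
    exact congrArg _ (sum_congr rfl fun a _ => sum_congr rfl fun s' _ => mul_left_comm _ _ _)
  rw [sum_occupancy_mul hγ0 hγ1 hK hπ, sum_occupancy_mul hγ0 hγ1 hK' hπ, hreward,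
    ← dotProduct_mulVec, ← dotProduct_mulVec]
  change _ * μ₀ ⬝ᵥ R *ᵥ x = _ * μ₀ ⬝ᵥ R' *ᵥ (x + γ • (P - P') *ᵥ R *ᵥ x)
  rw [mulVec_add, mulVec_smul, mulVec_mulVec, mulVec_mulVec, ← smul_mulVec,
    ← add_mulVec, ← hresolvent]

end Occupancy

theorem optimality_gap_intermediate_general {S A : Type*} [Fintype S] [Fintype A]
    [DecidableEq S]
    (γ : ℝ) (hγ0 : 0 < γ) (hγ1 : γ < 1)
    (r_max : ℝ) (hr_max : 0 < r_max)
    (c : ℝ) (hc : c = r_max / (1 - γ))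
    (μ₀ : S → ℝ) (hμ0 : ∀ x, 0 ≤ μ₀ x) (hμ1 : ∑ x, μ₀ x = 1)
    (T That : S → A → S → ℝ) (hT : IsKernel T) (hThat : IsKernel That)
    (r : S → A → ℝ) (hr : ∀ s a, |r s a| ≤ r_max)
    (u uhat : S → A → ℝ) (ε_density : ℝ)
    (hu : ∀ s' a, |u s' a - uhat s' a| ≤ ε_density)
    (U Uhat : S → A → ℝ)
    (hU : ∀ s a, U s a = ∑ s', That s a s' * u s' a)
    (hUhat : ∀ s a, Uhat s a = ∑ s', That s a s' * uhat s' a)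
    (C : ℝ) (hC : 0 < C) (ε_approx : ℝ)
    (hmodel : ∀ s a, ∀ f : S → ℝ, (∀ s', |f s'| ≤ 1) →
      |∑ s', (That s a s' - T s a s') * f s'| ≤ C * U s a + ε_approx)
    (lam : ℝ) (hlam : lam = γ * c * C)
    (πhat : S → A → ℝ) (hπhat : IsPolicy πhat)
    (hopt : ∀ π : S → A → ℝ, IsPolicy π →
      (∑ s, ∑ a, occupancy γ μ₀ That πhat s a * (r s a - lam * Uhat s a)) ≥
        ∑ s, ∑ a, occupancy γ μ₀ That π s a * (r s a - lam * Uhat s a)) :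
    ∀ π : S → A → ℝ, IsPolicy π →
      (∑ s, ∑ a, occupancy γ μ₀ T πhat s a * r s a) ≥
        (∑ s, ∑ a, occupancy γ μ₀ That π s a * (r s a - lam * U s a)) -
          2 * lam * ε_density - γ * c * ε_approx := by
  intro π hπ
  have hc0 : 0 < c := hc ▸ div_pos hr_max (sub_pos.2 hγ1)
  have hlam0 : 0 ≤ lam := hlam ▸ by positivity
  have hmodel_error (s : S) (a : A) :
      r s a - lam * U s a ≤
        r s a + γ * ∑ s', (T s a s' - That s a s') * policyValue γ T πhat r s' +
          γ * c * ε_approx := by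
    have hbound := abs_sum_mul_le_of_forall_abs_le_one hc0
      (fun s' => hc ▸ abs_policyValue_le hγ0.le hγ1 hT hπhat hr s') (hmodel s a)
    have hflip : ∑ s', (T s a s' - That s a s') * policyValue γ T πhat r s' =
        -∑ s', (That s a s' - T s a s') * policyValue γ T πhat r s' := by
      simp only [← sum_neg_distrib, ← neg_mul, neg_sub]
    rw [hflip, hlam]
    linarith [mul_le_mul_of_nonneg_left ((le_abs_self _).trans hbound) hγ0.le]
  have hdensity (s : S) (a : A) :
      r s a - lam * U s a ≤ r s a - lam * Uhat s a + lam * ε_density ∧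
        r s a - lam * Uhat s a ≤ r s a - lam * U s a + lam * ε_density := by
    have hUU : |U s a - Uhat s a| ≤ ε_density := by
      simpa [hU, hUhat, ← sum_sub_distrib, ← mul_sub, hThat.2] using
        abs_sum_mul_le_sum_mul (s := univ) (fun s' _ => hThat.1 s a s') fun s' _ => hu s' a
    obtain ⟨hlow, hupp⟩ := abs_le.1 hUU
    constructor <;> linarith [mul_le_mul_of_nonneg_left hlow hlam0,
      mul_le_mul_of_nonneg_left hupp hlam0]
  have hπ_density := sum_occupancy_mul_le_add hγ0.le hγ1 hμ0 hμ1 hThat hπ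
    fun s a => (hdensity s a).1
  have hπhat_density := sum_occupancy_mul_le_add hγ0.le hγ1 hμ0 hμ1 hThat hπhat
    fun s a => (hdensity s a).2
  have hπhat_model := sum_occupancy_mul_le_add hγ0.le hγ1 hμ0 hμ1 hThat hπhat hmodel_error
  rw [ge_iff_le, sum_occupancy_mul_simulation hγ0.le hγ1 hT hThat hπhat r]
  linarith [hopt π hπ]

/-- Intermediate lower bound in the optimality-gap proof (equation
`before_conversion` in the paper). -/
theorem optimality_gap_intermediate {S A : Type*} [Fintype S] [Fintype A]
    [DecidableEq S] [Nonempty S] [Nonempty A]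
    (γ : ℝ) (hγ0 : 0 < γ) (hγ1 : γ < 1)
    (r_max : ℝ) (hr_max : 0 < r_max)
    (c : ℝ) (hc : c = r_max / (1 - γ))
    (μ₀ : S → ℝ) (hμ0 : ∀ x, 0 ≤ μ₀ x) (hμ1 : ∑ x, μ₀ x = 1)
    (T That : S → A → S → ℝ) (hT : IsKernel T) (hThat : IsKernel That)
    (r : S → A → ℝ) (hr : ∀ s a, |r s a| ≤ r_max)
    (u uhat : S → A → ℝ) (ε_density : ℝ) (hεd : 0 ≤ ε_density)
    (hu : ∀ s' a, |u s' a - uhat s' a| ≤ ε_density)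
    (U Uhat : S → A → ℝ)
    (hU : ∀ s a, U s a = ∑ s', That s a s' * u s' a)
    (hUhat : ∀ s a, Uhat s a = ∑ s', That s a s' * uhat s' a)
    (C : ℝ) (hC : 0 < C) (ε_approx : ℝ) (hεa : 0 ≤ ε_approx)
    (hmodel : ∀ s a, ∀ f : S → ℝ, (∀ s', |f s'| ≤ 1) →
      |∑ s', (That s a s' - T s a s') * f s'| ≤ C * U s a + ε_approx)
    (lam : ℝ) (hlam : lam = γ * c * C)
    (πhat : S → A → ℝ) (hπhat : IsPolicy πhat)
    (hopt : ∀ π : S → A → ℝ, IsPolicy π →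
      (∑ s, ∑ a, occupancy γ μ₀ That πhat s a * (r s a - lam * Uhat s a)) ≥
        ∑ s, ∑ a, occupancy γ μ₀ That π s a * (r s a - lam * Uhat s a)) :
    ∀ π : S → A → ℝ, IsPolicy π →
      (∑ s, ∑ a, occupancy γ μ₀ T πhat s a * r s a) ≥
        (∑ s, ∑ a, occupancy γ μ₀ That π s a * (r s a - lam * U s a)) -
          2 * lam * ε_density - γ * c * ε_approx :=
  optimality_gap_intermediate_general γ hγ0 hγ1 r_max hr_max c hc μ₀ hμ0 hμ1 T That hT hThat r hr u
    uhat ε_density hu U Uhat hU hUhat C hC ε_approx hmodel lam hlam πhat hπhat hopt
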